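/- arXiv:0904.0854 — 10 statements merged into one kernel-verified Lean document; each statement's English description precedes it below -/
import Mathlib

section
/- Let P1 = (X1:Y1:Z1) and P2 = (X2:Y2:Z2) be two affine points (Z1 ≠ 0, Z2 ≠ 0) on the projective twisted Edwards curve E_{a,d}. Define c_{Z²} = X1·X2·(Y1·Z2 − Y2·Z1), c_{XY} = Z1·Z2·(X1·Z2 − X2·Z1 + X1·Y2 − X2·Y1), and c_{XZ} = X2·Y2·Z1² − X1·Y1·Z2² + Y1·Y2·(X2·Z1 − X1·Z2). Then the conic φ = c_{Z²}·(Z² + Y·Z) + c_{XY}·X·Y + c_{XZ}·X·Z vanishes at both P1 and P2, i.e. c_{Z²}·(Zi² + Yi·Zi) + c_{XY}·Xi·Yi + c_{XZ}·Xi·Zi = 0 for i = 1, 2. -/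
/-- The conic through Ω₁, Ω₂, O' with the coefficients of Theorem 3.1(a)
vanishes at the two affine points P₁, P₂ of the projective twisted Edwards
curve E_{a,d}. -/
theorem conic_vanishes_at_P1_and_P2
    (K : Type*) [Field K] (hchar : (2 : K) ≠ 0)
    (a d : K) (ha : a ≠ 0) (hd : d ≠ 0) (had : a ≠ d)
    (X1 Y1 Z1 X2 Y2 Z2 : K) (hZ1 : Z1 ≠ 0) (hZ2 : Z2 ≠ 0)
    (hP1 : a * X1 ^ 2 * Z1 ^ 2 + Y1 ^ 2 * Z1 ^ 2 = Z1 ^ 4 + d * X1 ^ 2 * Y1 ^ 2)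
    (hP2 : a * X2 ^ 2 * Z2 ^ 2 + Y2 ^ 2 * Z2 ^ 2 = Z2 ^ 4 + d * X2 ^ 2 * Y2 ^ 2)
    (cZ2 cXY cXZ : K)
    (hcZ2 : cZ2 = X1 * X2 * (Y1 * Z2 - Y2 * Z1))
    (hcXY : cXY = Z1 * Z2 * (X1 * Z2 - X2 * Z1 + X1 * Y2 - X2 * Y1))
    (hcXZ : cXZ = X2 * Y2 * Z1 ^ 2 - X1 * Y1 * Z2 ^ 2 + Y1 * Y2 * (X2 * Z1 - X1 * Z2)) :
    cZ2 * (Z1 ^ 2 + Y1 * Z1) + cXY * (X1 * Y1) + cXZ * (X1 * Z1) = 0 ∧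
    cZ2 * (Z2 ^ 2 + Y2 * Z2) + cXY * (X2 * Y2) + cXZ * (X2 * Z2) = 0 := by
  subst hcZ2 hcXY hcXZ
  constructor <;> ring
end

section
/- Let P1 = (X1:Y1:Z1) and P2 = (X2:Y2:Z2) be two affine points (Z1 ≠ 0, Z2 ≠ 0) on the projective twisted Edwards curve E_{a,d}, with P1 ≠ P2 as points of P²(K) and P1, P2 both different from O' = (0:−1:1). Define c_{Z²} = X1·X2·(Y1·Z2 − Y2·Z1), c_{XY} = Z1·Z2·(X1·Z2 − X2·Z1 + X1·Y2 − X2·Y1), and c_{XZ} = X2·Y2·Z1² − X1·Y1·Z2² + Y1·Y2·(X2·Z1 − X1·Z2). Then (c_{Z²}, c_{XY}, c_{XZ}) ≠ (0,0,0), and every triple (c'_{Z²}, c'_{XY}, c'_{XZ}) ∈ K³ satisfying c'_{Z²}·(Zi² + Yi·Zi) + c'_{XY}·Xi·Yi + c'_{XZ}·Xi·Zi = 0 for i = 1, 2 is a scalar multiple of (c_{Z²}, c_{XY}, c_{XZ}); i.e. the conic of the pencil through Ω1, Ω2, O' passing through P1 and P2 is unique up to scalars. -/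
/-- For two distinct affine points P₁ ≠ P₂ on the projective twisted Edwards curve,
both different from O' = (0:−1:1), the coefficients of Theorem 3.1(a) are not all zero,
and any triple of coefficients of a conic of the pencil through Ω₁, Ω₂, O' that passes
through P₁ and P₂ is a scalar multiple of them. -/
theorem conic_coefficients_unique_up_to_scalars
    (K : Type*) [Field K] (hchar : (2 : K) ≠ 0)
    (a d : K) (ha : a ≠ 0) (hd : d ≠ 0) (had : a ≠ d)
    (X1 Y1 Z1 X2 Y2 Z2 : K) (hZ1 : Z1 ≠ 0) (hZ2 : Z2 ≠ 0)
    (hP1 : a * X1 ^ 2 * Z1 ^ 2 + Y1 ^ 2 * Z1 ^ 2 = Z1 ^ 4 + d * X1 ^ 2 * Y1 ^ 2)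
    (hP2 : a * X2 ^ 2 * Z2 ^ 2 + Y2 ^ 2 * Z2 ^ 2 = Z2 ^ 4 + d * X2 ^ 2 * Y2 ^ 2)
    (hP1P2 : ¬ (X1 * Z2 = X2 * Z1 ∧ Y1 * Z2 = Y2 * Z1))
    (hP1O' : ¬ (X1 = 0 ∧ Y1 = -Z1))
    (hP2O' : ¬ (X2 = 0 ∧ Y2 = -Z2))
    (cZ2 cXY cXZ : K)
    (hcZ2 : cZ2 = X1 * X2 * (Y1 * Z2 - Y2 * Z1))
    (hcXY : cXY = Z1 * Z2 * (X1 * Z2 - X2 * Z1 + X1 * Y2 - X2 * Y1))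
    (hcXZ : cXZ = X2 * Y2 * Z1 ^ 2 - X1 * Y1 * Z2 ^ 2 + Y1 * Y2 * (X2 * Z1 - X1 * Z2)) :
    ¬ (cZ2 = 0 ∧ cXY = 0 ∧ cXZ = 0) ∧
    ∀ c1 c2 c3 : K,
      c1 * (Z1 ^ 2 + Y1 * Z1) + c2 * (X1 * Y1) + c3 * (X1 * Z1) = 0 →
      c1 * (Z2 ^ 2 + Y2 * Z2) + c2 * (X2 * Y2) + c3 * (X2 * Z2) = 0 →
      ∃ lam : K, c1 = lam * cZ2 ∧ c2 = lam * cXY ∧ c3 = lam * cXZ := by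
  subst hcZ2; subst hcXY; subst hcXZ
  have key : ¬ (X1 * X2 * (Y1 * Z2 - Y2 * Z1) = 0 ∧
      Z1 * Z2 * (X1 * Z2 - X2 * Z1 + X1 * Y2 - X2 * Y1) = 0 ∧
      X2 * Y2 * Z1 ^ 2 - X1 * Y1 * Z2 ^ 2 + Y1 * Y2 * (X2 * Z1 - X1 * Z2) = 0) := by
    rintro ⟨h1, h2, h3⟩
    by_cases hX1 : X1 = 0
    · subst hX1
      have hY1 : Y1 = Z1 := by
        have hne : Y1 + Z1 ≠ 0 := by
          intro h
          exact hP1O' ⟨rfl, by linear_combination h⟩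
        have hfac : (Y1 - Z1) * ((Y1 + Z1) * Z1 ^ 2) = 0 := by linear_combination hP1
        rcases mul_eq_zero.mp hfac with h | h
        · linear_combination h
        · exact absurd h (mul_ne_zero hne (pow_ne_zero 2 hZ1))
      have hX2 : X2 = 0 := by
        by_contra hX2
        have h : 2 * (X2 * (Z1 ^ 2 * Z2)) = 0 := by
          linear_combination -h2 - X2 * Z1 * Z2 * hY1
        exact (mul_ne_zero hchar (mul_ne_zero hX2
          (mul_ne_zero (pow_ne_zero 2 hZ1) hZ2))) h
      subst hX2
      have hY2 : Y2 = Z2 := by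
        have hne : Y2 + Z2 ≠ 0 := by
          intro h
          exact hP2O' ⟨rfl, by linear_combination h⟩
        have hfac : (Y2 - Z2) * ((Y2 + Z2) * Z2 ^ 2) = 0 := by linear_combination hP2
        rcases mul_eq_zero.mp hfac with h | h
        · linear_combination h
        · exact absurd h (mul_ne_zero hne (pow_ne_zero 2 hZ2))
      exact hP1P2 ⟨by ring, by linear_combination Z2 * hY1 - Z1 * hY2⟩
    · by_cases hX2 : X2 = 0
      · subst hX2
        have hY2 : Y2 = Z2 := by
          have hne : Y2 + Z2 ≠ 0 := by
            intro h
            exact hP2O' ⟨rfl, by linear_combination h⟩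
          have hfac : (Y2 - Z2) * ((Y2 + Z2) * Z2 ^ 2) = 0 := by linear_combination hP2
          rcases mul_eq_zero.mp hfac with h | h
          · linear_combination h
          · exact absurd h (mul_ne_zero hne (pow_ne_zero 2 hZ2))
        have h : 2 * (X1 * (Z1 * Z2 ^ 2)) = 0 := by
          linear_combination h2 - X1 * Z1 * Z2 * hY2
        exact (mul_ne_zero hchar (mul_ne_zero hX1
          (mul_ne_zero hZ1 (pow_ne_zero 2 hZ2)))) h
      · -- X1 ≠ 0, X2 ≠ 0
        have hY : Y1 * Z2 - Y2 * Z1 = 0 := by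
          rcases mul_eq_zero.mp h1 with h | h
          · exact absurd h (mul_ne_zero hX1 hX2)
          · exact h
        have hu : X1 * Z2 - X2 * Z1 ≠ 0 := by
          intro h
          exact hP1P2 ⟨by linear_combination h, by linear_combination hY⟩
        have hs : X1 * Z2 - X2 * Z1 + X1 * Y2 - X2 * Y1 = 0 := by
          rcases mul_eq_zero.mp h2 with h | h
          · exact absurd h (mul_ne_zero hZ1 hZ2)
          · exact h
        have hzy : (X1 * Z2 - X2 * Z1) * (Z2 + Y2) = 0 := by
          linear_combination Z2 * hs + X2 * hY
        have hY2 : Y2 = -Z2 := by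
          rcases mul_eq_zero.mp hzy with h | h
          · exact absurd h hu
          · linear_combination h
        subst hY2
        have h : (a - d) * (X2 ^ 2 * Z2 ^ 2) = 0 := by linear_combination hP2
        exact (mul_ne_zero (sub_ne_zero.mpr had)
          (mul_ne_zero (pow_ne_zero 2 hX2) (pow_ne_zero 2 hZ2))) h
  refine ⟨key, ?_⟩
  intro c1 c2 c3 e1 e2
  set n1 := X1 * X2 * (Y1 * Z2 - Y2 * Z1) with hn1
  set n2 := Z1 * Z2 * (X1 * Z2 - X2 * Z1 + X1 * Y2 - X2 * Y1) with hn2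
  set n3 := X2 * Y2 * Z1 ^ 2 - X1 * Y1 * Z2 ^ 2 + Y1 * Y2 * (X2 * Z1 - X1 * Z2) with hn3
  have ea : c2 * n3 = c3 * n2 := by
    rw [hn2, hn3]
    linear_combination (Z1 ^ 2 + Y1 * Z1) * e2 - (Z2 ^ 2 + Y2 * Z2) * e1
  have eb : c3 * n1 = c1 * n3 := by
    rw [hn1, hn3]
    linear_combination (X1 * Y1) * e2 - (X2 * Y2) * e1
  have ec : c1 * n2 = c2 * n1 := by
    rw [hn1, hn2]
    linear_combination (X1 * Z1) * e2 - (X2 * Z2) * e1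
  by_cases h1 : n1 = 0
  · by_cases h2 : n2 = 0
    · have h3 : n3 ≠ 0 := fun h => key ⟨h1, h2, h⟩
      refine ⟨c3 / n3, ?_, ?_, ?_⟩
      · rw [div_mul_eq_mul_div, eq_div_iff h3]; linear_combination -eb
      · rw [div_mul_eq_mul_div, eq_div_iff h3]; linear_combination ea
      · rw [div_mul_eq_mul_div, eq_div_iff h3]
    · refine ⟨c2 / n2, ?_, ?_, ?_⟩
      · rw [div_mul_eq_mul_div, eq_div_iff h2]; linear_combination ec
      · rw [div_mul_eq_mul_div, eq_div_iff h2]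
      · rw [div_mul_eq_mul_div, eq_div_iff h2]; linear_combination -ea
  · refine ⟨c1 / n1, ?_, ?_, ?_⟩
    · rw [div_mul_eq_mul_div, eq_div_iff h1]
    · rw [div_mul_eq_mul_div, eq_div_iff h1]; linear_combination -ec
    · rw [div_mul_eq_mul_div, eq_div_iff h1]; linear_combination eb
end

section
/- Let (x1, y1) be a point on the twisted Edwards curve E_{a,d}, i.e. a·x1² + y1² = 1 + d·x1²·y1². Define c_{Z²} = x1·(1 − y1), c_{XY} = d·x1²·y1 − 1, c_{XZ} = y1 − a·x1². Then the conic φ = c_{Z²}·(Z² + Y·Z) + c_{XY}·X·Y + c_{XZ}·X·Z is tangent to E_{a,d} at (x1, y1): the tangent vectors (d·x1²·y1 − y1, a·x1 − d·x1·y1²) of the curve and (−c_{Z²} − c_{XY}·x1, c_{XY}·y1 + c_{XZ}) of the conic at (x1, y1) are collinear, i.e. (d·x1²·y1 − y1)·(c_{XY}·y1 + c_{XZ}) − (a·x1 − d·x1·y1²)·(−c_{Z²} − c_{XY}·x1) = 0. -/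
/-- Case (c) of Theorem 3.1: the conic is tangent to the twisted Edwards curve at
(x₁, y₁): the tangent vectors of the curve and of the conic at that point are collinear. -/
theorem conic_tangent_to_curve
    (K : Type*) [Field K] (hchar : (2 : K) ≠ 0)
    (a d : K) (ha : a ≠ 0) (hd : d ≠ 0) (had : a ≠ d)
    (x1 y1 : K)
    (h1 : a * x1 ^ 2 + y1 ^ 2 = 1 + d * x1 ^ 2 * y1 ^ 2)
    (cZ2 cXY cXZ : K)
    (hcZ2 : cZ2 = x1 * (1 - y1))
    (hcXY : cXY = d * x1 ^ 2 * y1 - 1)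
    (hcXZ : cXZ = y1 - a * x1 ^ 2) :
    (d * x1 ^ 2 * y1 - y1) * (cXY * y1 + cXZ)
      - (a * x1 - d * x1 * y1 ^ 2) * (-cZ2 - cXY * x1) = 0 := by
  subst hcZ2 hcXY hcXZ; ring
end

section
/- Let (x1, y1) and (x2, y2) be two distinct points on the twisted Edwards curve E_{a,d}, both different from O' = (0,−1), and assume 1 + d·x1·x2·y1·y2 ≠ 0 and 1 − d·x1·x2·y1·y2 ≠ 0. Let (x3, y3) = ((x1·y2 + y1·x2)/(1 + d·x1·x2·y1·y2), (y1·y2 − a·x1·x2)/(1 − d·x1·x2·y1·y2)) be their Edwards sum. Define c_{Z²} = x1·x2·(y1 − y2), c_{XY} = x1 − x2 + x1·y2 − x2·y1, c_{XZ} = x2·y2 − x1·y1 + y1·y2·(x2 − x1). Then the conic φ = c_{Z²}·(Z² + Y·Z) + c_{XY}·X·Y + c_{XZ}·X·Z passes through the mirror point (−x3, y3) of the sum: c_{Z²}·(1 + y3) − c_{XY}·x3·y3 − c_{XZ}·x3 = 0. -/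
/-- The conic through Ω₁, Ω₂, O' and two distinct affine points P₁, P₂ (both ≠ O')
of the twisted Edwards curve passes through the mirror image (−x₃, y₃) of the
Edwards sum (x₃, y₃) = P₁ + P₂. -/
theorem conic_passes_through_mirror_of_sum
    (K : Type*) [Field K] (hchar : (2 : K) ≠ 0)
    (a d : K) (ha : a ≠ 0) (hd : d ≠ 0) (had : a ≠ d)
    (x1 y1 x2 y2 : K)
    (h1 : a * x1 ^ 2 + y1 ^ 2 = 1 + d * x1 ^ 2 * y1 ^ 2)
    (h2 : a * x2 ^ 2 + y2 ^ 2 = 1 + d * x2 ^ 2 * y2 ^ 2)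
    (hne : (x1, y1) ≠ (x2, y2))
    (hO1 : (x1, y1) ≠ (0, -1))
    (hO2 : (x2, y2) ≠ (0, -1))
    (hden1 : 1 + d * x1 * x2 * y1 * y2 ≠ 0)
    (hden2 : 1 - d * x1 * x2 * y1 * y2 ≠ 0)
    (x3 y3 : K)
    (hx3 : x3 = (x1 * y2 + y1 * x2) / (1 + d * x1 * x2 * y1 * y2))
    (hy3 : y3 = (y1 * y2 - a * x1 * x2) / (1 - d * x1 * x2 * y1 * y2))
    (cZ2 cXY cXZ : K)
    (hcZ2 : cZ2 = x1 * x2 * (y1 - y2))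
    (hcXY : cXY = x1 - x2 + x1 * y2 - x2 * y1)
    (hcXZ : cXZ = x2 * y2 - x1 * y1 + y1 * y2 * (x2 - x1)) :
    cZ2 * (1 + y3) - cXY * (x3 * y3) - cXZ * x3 = 0 := by
  subst hcZ2 hcXY hcXZ
  have e1 : x3 * (1 + d * x1 * x2 * y1 * y2) = x1 * y2 + y1 * x2 := by
    rw [hx3, div_mul_cancel₀ _ hden1]
  have e2 : y3 * (1 - d * x1 * x2 * y1 * y2) = y1 * y2 - a * x1 * x2 := by
    rw [hy3, div_mul_cancel₀ _ hden2]
  have hD : (1 + d * x1 * x2 * y1 * y2) * (1 - d * x1 * x2 * y1 * y2) ≠ 0 :=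
    mul_ne_zero hden1 hden2
  have key : (x1 * x2 * (y1 - y2) * (1 + y3)
      - (x1 - x2 + x1 * y2 - x2 * y1) * (x3 * y3)
      - (x2 * y2 - x1 * y1 + y1 * y2 * (x2 - x1)) * x3)
      * ((1 + d * x1 * x2 * y1 * y2) * (1 - d * x1 * x2 * y1 * y2)) = 0 := by
    linear_combination
      (x1 * x2 * (y1 - y2) * (1 + d * x1 * x2 * y1 * y2)
        - (x1 - x2 + x1 * y2 - x2 * y1) * (x1 * y2 + y1 * x2)) * e2
      + (-((x1 - x2 + x1 * y2 - x2 * y1) * y3 * (1 - d * x1 * x2 * y1 * y2))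
        - (x2 * y2 - x1 * y1 + y1 * y2 * (x2 - x1)) * (1 - d * x1 * x2 * y1 * y2)) * e1
      + (x1 * x2 * y2 + x1 * x2 * y2 ^ 2 + d * x1 * y1 * x2 ^ 3 * y2 ^ 2
        - d * x1 * y1 ^ 2 * x2 ^ 3 * y2
        + x2 ^ 2 * (y1 * y2 + d * x1 * y1 ^ 2 * x2 * y2)) * h1
      + (-(x1 * y1 * x2) - x1 * y1 ^ 2 * x2
        - x1 ^ 2 * (y1 * y2 + d * x1 * y1 ^ 2 * x2 * y2)) * h2
  exact (mul_eq_zero.mp key).resolve_right hD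
end

section
/- Let (x1, y1) be a point on the twisted Edwards curve E_{a,d} and assume 1 + d·x1²·y1² ≠ 0 and 1 − d·x1²·y1² ≠ 0. Let (x3, y3) = (2·x1·y1/(1 + d·x1²·y1²), (y1² − a·x1²)/(1 − d·x1²·y1²)) be its Edwards double. Define c_{Z²} = x1·(1 − y1), c_{XY} = d·x1²·y1 − 1, c_{XZ} = y1 − a·x1². Then the conic φ = c_{Z²}·(Z² + Y·Z) + c_{XY}·X·Y + c_{XZ}·X·Z passes through the mirror point (−x3, y3) of the double: c_{Z²}·(1 + y3) − c_{XY}·x3·y3 − c_{XZ}·x3 = 0. -/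
/-!
Clearing the denominators of the double, the value of the tangent conic at the mirrored double
is `x₁ (1 - y₁) (d x₁² y₁² - 1)` times the defect `a x₁² + y₁² - 1 - d x₁² y₁²` of the curve
equation, which vanishes at a point of the curve.
-/

lemma tangentConic_at_mirror_double_eq {K : Type*} [Field K] (a d x y : K)
    (hD₁ : 1 + d * x ^ 2 * y ^ 2 ≠ 0) (hD₂ : 1 - d * x ^ 2 * y ^ 2 ≠ 0) :
    x * (1 - y) * (1 + (y ^ 2 - a * x ^ 2) / (1 - d * x ^ 2 * y ^ 2))
        - (d * x ^ 2 * y - 1) * (2 * x * y / (1 + d * x ^ 2 * y ^ 2)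
          * ((y ^ 2 - a * x ^ 2) / (1 - d * x ^ 2 * y ^ 2)))
        - (y - a * x ^ 2) * (2 * x * y / (1 + d * x ^ 2 * y ^ 2)) =
      x * (1 - y) * (d * x ^ 2 * y ^ 2 - 1) * (a * x ^ 2 + y ^ 2 - (1 + d * x ^ 2 * y ^ 2))
        / ((1 + d * x ^ 2 * y ^ 2) * (1 - d * x ^ 2 * y ^ 2)) := by
  -- `field_simp` only recognises the denominators as `hD₁`, `hD₂` once `d x² y²` is atomic.
  generalize hdxy : d * x ^ 2 * y ^ 2 = e at *
  field_simp
  subst hdxy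
  ring

theorem tangent_conic_passes_through_mirror_of_double_general
    (K : Type*) [Field K]
    (a d : K)
    (x1 y1 : K)
    (h1 : a * x1 ^ 2 + y1 ^ 2 = 1 + d * x1 ^ 2 * y1 ^ 2)
    (hden1 : 1 + d * x1 ^ 2 * y1 ^ 2 ≠ 0)
    (hden2 : 1 - d * x1 ^ 2 * y1 ^ 2 ≠ 0)
    (x3 y3 : K)
    (hx3 : x3 = 2 * x1 * y1 / (1 + d * x1 ^ 2 * y1 ^ 2))
    (hy3 : y3 = (y1 ^ 2 - a * x1 ^ 2) / (1 - d * x1 ^ 2 * y1 ^ 2))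
    (cZ2 cXY cXZ : K)
    (hcZ2 : cZ2 = x1 * (1 - y1))
    (hcXY : cXY = d * x1 ^ 2 * y1 - 1)
    (hcXZ : cXZ = y1 - a * x1 ^ 2) :
    cZ2 * (1 + y3) - cXY * (x3 * y3) - cXZ * x3 = 0 := by
  subst hx3 hy3 hcZ2 hcXY hcXZ
  rw [tangentConic_at_mirror_double_eq a d x1 y1 hden1 hden2, sub_eq_zero_of_eq h1,
    mul_zero, zero_div]

/-- The tangent conic at a point (x₁, y₁) of the twisted Edwards curve passes through
the mirror image (−x₃, y₃) of the Edwards double (x₃, y₃) = 2·(x₁, y₁). -/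
theorem tangent_conic_passes_through_mirror_of_double
    (K : Type*) [Field K] (hchar : (2 : K) ≠ 0)
    (a d : K) (ha : a ≠ 0) (hd : d ≠ 0) (had : a ≠ d)
    (x1 y1 : K)
    (h1 : a * x1 ^ 2 + y1 ^ 2 = 1 + d * x1 ^ 2 * y1 ^ 2)
    (hden1 : 1 + d * x1 ^ 2 * y1 ^ 2 ≠ 0)
    (hden2 : 1 - d * x1 ^ 2 * y1 ^ 2 ≠ 0)
    (x3 y3 : K)
    (hx3 : x3 = 2 * x1 * y1 / (1 + d * x1 ^ 2 * y1 ^ 2))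
    (hy3 : y3 = (y1 ^ 2 - a * x1 ^ 2) / (1 - d * x1 ^ 2 * y1 ^ 2))
    (cZ2 cXY cXZ : K)
    (hcZ2 : cZ2 = x1 * (1 - y1))
    (hcXY : cXY = d * x1 ^ 2 * y1 - 1)
    (hcXZ : cXZ = y1 - a * x1 ^ 2) :
    cZ2 * (1 + y3) - cXY * (x3 * y3) - cXZ * x3 = 0 :=
  tangent_conic_passes_through_mirror_of_double_general K a d x1 y1 h1 hden1 hden2 x3 y3 hx3 hy3 cZ2
    cXY cXZ hcZ2 hcXY hcXZ
end

section
/- Let P1 = (X1:Y1:Z1:T1) and P2 = (X2:Y2:Z2:T2) be extended coordinates with Z1, Z2 ≠ 0, T1·Z1 = X1·Y1, T2·Z2 = X2·Y2, representing points (xi, yi) = (Xi/Zi, Yi/Zi) on the twisted Edwards curve E_{a,d}. Define A = X1·X2, B = Y1·Y2, C = Z1·T2, D = T1·Z2, E = D + C, F = (X1 − Y1)·(X2 + Y2) + B − A, G = B + a·A, H = D − C, X3 = E·F, Y3 = G·H, T3 = E·H, Z3 = F·G. Assume F ≠ 0, G ≠ 0, 1 + d·x1·x2·y1·y2 ≠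 0 and 1 − d·x1·x2·y1·y2 ≠ 0. Then Z3 ≠ 0, T3·Z3 = X3·Y3, and (X3/Z3, Y3/Z3) equals the Edwards sum of (x1, y1) and (x2, y2), i.e. X3/Z3 = (x1·y2 + y1·x2)/(1 + d·x1·x2·y1·y2) and Y3/Z3 = (y1·y2 − a·x1·x2)/(1 − d·x1·x2·y1·y2). -/
/-- The explicit addition formulas in extended Edwards coordinates compute the
Edwards sum of the two represented affine points. -/
theorem extended_addition_formulas_correct
    (K : Type*) [Field K] (hchar : (2 : K) ≠ 0)
    (a d : K) (ha : a ≠ 0) (hd : d ≠ 0) (had : a ≠ d)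
    (X1 Y1 Z1 T1 X2 Y2 Z2 T2 : K) (hZ1 : Z1 ≠ 0) (hZ2 : Z2 ≠ 0)
    (hT1 : T1 * Z1 = X1 * Y1) (hT2 : T2 * Z2 = X2 * Y2)
    (x1 y1 x2 y2 : K)
    (hx1 : x1 = X1 / Z1) (hy1 : y1 = Y1 / Z1)
    (hx2 : x2 = X2 / Z2) (hy2 : y2 = Y2 / Z2)
    (h1 : a * x1 ^ 2 + y1 ^ 2 = 1 + d * x1 ^ 2 * y1 ^ 2)
    (h2 : a * x2 ^ 2 + y2 ^ 2 = 1 + d * x2 ^ 2 * y2 ^ 2)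
    (A B C D E F G H X3 Y3 T3 Z3 : K)
    (hA : A = X1 * X2) (hB : B = Y1 * Y2) (hC : C = Z1 * T2) (hD : D = T1 * Z2)
    (hE : E = D + C)
    (hF : F = (X1 - Y1) * (X2 + Y2) + B - A)
    (hG : G = B + a * A) (hH : H = D - C)
    (hX3 : X3 = E * F) (hY3 : Y3 = G * H) (hT3 : T3 = E * H) (hZ3 : Z3 = F * G)
    (hFne : F ≠ 0) (hGne : G ≠ 0)
    (hden1 : 1 + d * x1 * x2 * y1 * y2 ≠ 0)
    (hden2 : 1 - d * x1 * x2 * y1 * y2 ≠ 0) :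
    Z3 ≠ 0 ∧ T3 * Z3 = X3 * Y3 ∧
    X3 / Z3 = (x1 * y2 + y1 * x2) / (1 + d * x1 * x2 * y1 * y2) ∧
    Y3 / Z3 = (y1 * y2 - a * x1 * x2) / (1 - d * x1 * x2 * y1 * y2) := by
  -- express projective coordinates in terms of affine ones
  have hX1 : X1 = x1 * Z1 := by rw [hx1]; field_simp
  have hY1 : Y1 = y1 * Z1 := by rw [hy1]; field_simp
  have hX2 : X2 = x2 * Z2 := by rw [hx2]; field_simp
  have hY2 : Y2 = y2 * Z2 := by rw [hy2]; field_simp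
  have hT1' : T1 = x1 * y1 * Z1 := by
    apply mul_right_cancel₀ hZ1
    rw [hT1, hX1, hY1]; ring
  have hT2' : T2 = x2 * y2 * Z2 := by
    apply mul_right_cancel₀ hZ2
    rw [hT2, hX2, hY2]; ring
  have hZZ : Z1 * Z2 ≠ 0 := mul_ne_zero hZ1 hZ2
  have hE' : E = (x1 * y1 + x2 * y2) * (Z1 * Z2) := by
    rw [hE, hD, hC, hT1', hT2']; ring
  have hH' : H = (x1 * y1 - x2 * y2) * (Z1 * Z2) := by
    rw [hH, hD, hC, hT1', hT2']; ring
  have hF' : F = (x1 * y2 - x2 * y1) * (Z1 * Z2) := by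
    rw [hF, hB, hA, hX1, hY1, hX2, hY2]; ring
  have hG' : G = (y1 * y2 + a * (x1 * x2)) * (Z1 * Z2) := by
    rw [hG, hB, hA, hX1, hY1, hX2, hY2]; ring
  have hGc : y1 * y2 + a * (x1 * x2) ≠ 0 := by
    intro h; apply hGne; rw [hG', h, zero_mul]
  have hFc : x1 * y2 - x2 * y1 ≠ 0 := by
    intro h; apply hFne; rw [hF', h, zero_mul]
  refine ⟨by rw [hZ3]; exact mul_ne_zero hFne hGne, by rw [hT3, hZ3, hX3, hY3]; ring, ?_, ?_⟩
  · have : X3 / Z3 = E / G := by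
      rw [hX3, hZ3, mul_comm E F, mul_div_mul_left _ _ hFne]
    rw [this, hE', hG', mul_div_mul_right _ _ hZZ,
      div_eq_div_iff hGc hden1]
    linear_combination (-(x1 * y1)) * h2 + (-(x2 * y2)) * h1
  · have : Y3 / Z3 = H / F := by
      rw [hY3, hZ3, mul_comm F G, mul_div_mul_left _ _ hGne]
    rw [this, hH', hF', mul_div_mul_right _ _ hZZ,
      div_eq_div_iff hFc hden2]
    linear_combination (-(x1 * y1)) * h2 + (x2 * y2) * h1
end

section
/- Let P1 = (X1:Y1:Z1:T1) and P2 = (X2:Y2:Z2:T2) be extended coordinates with Z1, Z2 ≠ 0, T1·Z1 = X1·Y1 and T2·Z2 = X2·Y2. Then the conic coefficients computed in the explicit addition formulas, namely c'_{Z²} = (T1 − X1)·(T2 + X2) − T1·T2 + X1·X2, c'_{XY} = X1·Z2 − X2·Z1 + (X1 − Y1)·(X2 + Y2) + Y1·Y2 − X1·X2, c'_{XZ} = (Y1 − T1)·(Y2 + T2) − Y1·Y2 + T1·T2 − (T1·Z2 − Z1·T2), satisfy Z1·Z2·c'_{Z²} = X1·X2·(Y1·Z2 − Y2·Z1), Z1·Z2·c'_{XY}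 = Z1·Z2·(X1·Z2 − X2·Z1 + X1·Y2 − X2·Y1), and Z1·Z2·c'_{XZ} = X2·Y2·Z1² − X1·Y1·Z2² + Y1·Y2·(X2·Z1 − X1·Z2); i.e. the computed triple is the triple of Theorem 3.1(a) scaled by 1/(Z1·Z2). -/
/-- The conic coefficients computed by the explicit addition formulas in extended
coordinates agree with those of Theorem 3.1(a) up to the factor 1/(Z₁·Z₂). -/
theorem extended_addition_conic_coefficients
    (K : Type*) [Field K] (hchar : (2 : K) ≠ 0)
    (a d : K) (ha : a ≠ 0) (hd : d ≠ 0) (had : a ≠ d)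
    (X1 Y1 Z1 T1 X2 Y2 Z2 T2 : K) (hZ1 : Z1 ≠ 0) (hZ2 : Z2 ≠ 0)
    (hT1 : T1 * Z1 = X1 * Y1) (hT2 : T2 * Z2 = X2 * Y2)
    (cZ2' cXY' cXZ' : K)
    (hcZ2' : cZ2' = (T1 - X1) * (T2 + X2) - T1 * T2 + X1 * X2)
    (hcXY' : cXY' = X1 * Z2 - X2 * Z1 + (X1 - Y1) * (X2 + Y2) + Y1 * Y2 - X1 * X2)
    (hcXZ' : cXZ' = (Y1 - T1) * (Y2 + T2) - Y1 * Y2 + T1 * T2 - (T1 * Z2 - Z1 * T2)) :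
    Z1 * Z2 * cZ2' = X1 * X2 * (Y1 * Z2 - Y2 * Z1) ∧
    Z1 * Z2 * cXY' = Z1 * Z2 * (X1 * Z2 - X2 * Z1 + X1 * Y2 - X2 * Y1) ∧
    Z1 * Z2 * cXZ' = X2 * Y2 * Z1 ^ 2 - X1 * Y1 * Z2 ^ 2 + Y1 * Y2 * (X2 * Z1 - X1 * Z2) := by
  subst hcZ2' hcXY' hcXZ'
  refine ⟨?_, ?_, ?_⟩
  · linear_combination Z2 * X2 * hT1 - Z1 * X1 * hT2
  · ring
  · linear_combination (-Z2 * Y2 - Z2 * Z2) * hT1 + (Z1 * Y1 + Z1 * Z1) * hT2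
end

section
/- (Mixed addition in Jacobian coordinates.) Let (X1, Y1, Z1) with Z1 ≠ 0 represent the affine point (x1, y1) = (X1/Z1², Y1/Z1³) on E: y² = x³ + a4·x + a6, and let (x2, y2) be an affine point of E with x1 ≠ x2. Define T1 = Z1², R2 = y2², B = x2·T1, D = ((y2 + Z1)² − R2 − T1)·T1, H = B − X1, I = H², E' = 4·I, J = H·E', L1 = D − 2·Y1, V = X1·E', X3 = L1² − J − 2·V, Y3 = L1·(V − X3) − 2·Y1·J, Z3 = (Z1 + H)² − T1 − I. Then Z3 ≠ 0, λ = L1/Z3 where λ = (y2 − y1)/(x2 − x1), and (X3/Z3², Y3/Z3³) = (x3, y3) where x3 = λ² − x1 − x2 and y3 = λ·(x1 − x3) − y1; i.e. (X3 : Y3 : Z3) represents the sum of the two points on E. -/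
/-! With h = x₂ - x₁, the formulas compute H = Z₁²h and Z₃ = 2Z₁H = 2Z₁³h, the products
2Z₁H and 2y₂Z₁³ being obtained from the squares (Z₁ + H)² and (y₂ + Z₁)². Against the weights
of Z₃ one then has L₁ = λZ₃, V = x₁Z₃², J = hZ₃² and 2Y₁J = y₁Z₃³, and substituting these
into X₃ and Y₃ turns them into the affine chord formulas multiplied by Z₃² and Z₃³. -/

section MixedAddition

variable {K : Type*} [Field K]

theorem chord_sum_homogenized {Z lam x1 x2 y1 L J V W X3 : K}
    (hL : L = lam * Z) (hJ : J = (x2 - x1) * Z ^ 2) (hV : V = x1 * Z ^ 2)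
    (hW : W = y1 * Z ^ 3) (hX3 : X3 = L ^ 2 - J - 2 * V) :
    X3 = Z ^ 2 * (lam ^ 2 - x1 - x2) ∧
      L * (V - X3) - W = Z ^ 3 * (lam * (x1 - (lam ^ 2 - x1 - x2)) - y1) := by
  have hX3' : X3 = Z ^ 2 * (lam ^ 2 - x1 - x2) := by rw [hX3, hL, hJ, hV]; ring
  exact ⟨hX3', by rw [hX3', hL, hV, hW]; ring⟩

theorem mixedAdd_weights {Z1 H Z3 x1 x2 y1 : K} (hH : H = Z1 ^ 2 * (x2 - x1))
    (hZ3 : Z3 = 2 * Z1 * H) :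
    H * (4 * H ^ 2) = (x2 - x1) * Z3 ^ 2 ∧ x1 * Z1 ^ 2 * (4 * H ^ 2) = x1 * Z3 ^ 2 ∧
      2 * (y1 * Z1 ^ 3) * (H * (4 * H ^ 2)) = y1 * Z3 ^ 3 := by
  subst hZ3 hH
  refine ⟨?_, ?_, ?_⟩ <;> ring

theorem mixedAdd_L1_eq {Z1 x1 x2 y1 y2 : K} (hx : x1 ≠ x2) :
    ((y2 + Z1) ^ 2 - y2 ^ 2 - Z1 ^ 2) * Z1 ^ 2 - 2 * (y1 * Z1 ^ 3) =
      (y2 - y1) / (x2 - x1) * (2 * Z1 ^ 3 * (x2 - x1)) := by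
  have hd : x2 - x1 ≠ 0 := sub_ne_zero.mpr hx.symm
  field_simp
  ring

end MixedAddition

theorem jacobian_mixed_addition_correct_general
    (K : Type*) [Field K] (hchar : (2 : K) ≠ 0)
    (X1 Y1 Z1 : K) (hZ1 : Z1 ≠ 0)
    (x1 y1 x2 y2 : K)
    (hx1 : x1 = X1 / Z1 ^ 2) (hy1 : y1 = Y1 / Z1 ^ 3)
    (hxne : x1 ≠ x2)
    (T1 R2 B D H I E' J L1 V X3 Y3 Z3 : K)
    (hT1 : T1 = Z1 ^ 2) (hR2 : R2 = y2 ^ 2) (hB : B = x2 * T1)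
    (hD : D = ((y2 + Z1) ^ 2 - R2 - T1) * T1)
    (hH : H = B - X1) (hI : I = H ^ 2) (hE : E' = 4 * I) (hJ : J = H * E')
    (hL1 : L1 = D - 2 * Y1) (hV : V = X1 * E')
    (hX3 : X3 = L1 ^ 2 - J - 2 * V)
    (hY3 : Y3 = L1 * (V - X3) - 2 * Y1 * J)
    (hZ3 : Z3 = (Z1 + H) ^ 2 - T1 - I)
    (lam x3 y3 : K)
    (hlam : lam = (y2 - y1) / (x2 - x1))
    (hx3 : x3 = lam ^ 2 - x1 - x2)
    (hy3 : y3 = lam * (x1 - x3) - y1) :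
    Z3 ≠ 0 ∧ L1 / Z3 = lam ∧ X3 / Z3 ^ 2 = x3 ∧ Y3 / Z3 ^ 3 = y3 := by
  have hX1 : X1 = x1 * Z1 ^ 2 := by rw [hx1, div_mul_cancel₀ X1 (pow_ne_zero 2 hZ1)]
  have hY1 : Y1 = y1 * Z1 ^ 3 := by rw [hy1, div_mul_cancel₀ Y1 (pow_ne_zero 3 hZ1)]
  have hHval : H = Z1 ^ 2 * (x2 - x1) := by rw [hH, hB, hT1, hX1]; ring
  have hZ3val : Z3 = 2 * Z1 * H := by rw [hZ3, hT1, hI]; ring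
  have hZ3ne : Z3 ≠ 0 := by
    rw [hZ3val, hHval]
    exact mul_ne_zero (mul_ne_zero hchar hZ1)
      (mul_ne_zero (pow_ne_zero 2 hZ1) (sub_ne_zero.mpr hxne.symm))
  have hL : L1 = lam * Z3 := by
    rw [hL1, hD, hR2, hT1, hY1, hlam, mixedAdd_L1_eq hxne, hZ3val, hHval]; ring
  obtain ⟨hJw, hVw, hWw⟩ := mixedAdd_weights (y1 := y1) hHval hZ3val
  obtain ⟨hX3w, hY3w⟩ := chord_sum_homogenized (W := 2 * Y1 * J) hL (by rw [hJ, hE, hI, hJw])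
    (by rw [hV, hE, hI, hX1, hVw]) (by rw [hJ, hE, hI, hY1, hWw]) hX3
  rw [hY3, hY3w, ← hx3, ← hy3, hX3w, ← hx3, hL]
  exact ⟨hZ3ne, mul_div_cancel_right₀ lam hZ3ne,
    mul_div_cancel_left₀ x3 (pow_ne_zero 2 hZ3ne), mul_div_cancel_left₀ y3 (pow_ne_zero 3 hZ3ne)⟩

/-- Mixed addition in Jacobian coordinates on a Weierstrass curve
y² = x³ + a₄x + a₆ : the explicit formulas compute the chord sum. -/
theorem jacobian_mixed_addition_correct
    (K : Type*) [Field K] (hchar : (2 : K) ≠ 0)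
    (a4 a6 : K)
    (X1 Y1 Z1 : K) (hZ1 : Z1 ≠ 0)
    (x1 y1 x2 y2 : K)
    (hx1 : x1 = X1 / Z1 ^ 2) (hy1 : y1 = Y1 / Z1 ^ 3)
    (h1 : y1 ^ 2 = x1 ^ 3 + a4 * x1 + a6)
    (h2 : y2 ^ 2 = x2 ^ 3 + a4 * x2 + a6)
    (hxne : x1 ≠ x2)
    (T1 R2 B D H I E' J L1 V X3 Y3 Z3 : K)
    (hT1 : T1 = Z1 ^ 2) (hR2 : R2 = y2 ^ 2) (hB : B = x2 * T1)
    (hD : D = ((y2 + Z1) ^ 2 - R2 - T1) * T1)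
    (hH : H = B - X1) (hI : I = H ^ 2) (hE : E' = 4 * I) (hJ : J = H * E')
    (hL1 : L1 = D - 2 * Y1) (hV : V = X1 * E')
    (hX3 : X3 = L1 ^ 2 - J - 2 * V)
    (hY3 : Y3 = L1 * (V - X3) - 2 * Y1 * J)
    (hZ3 : Z3 = (Z1 + H) ^ 2 - T1 - I)
    (lam x3 y3 : K)
    (hlam : lam = (y2 - y1) / (x2 - x1))
    (hx3 : x3 = lam ^ 2 - x1 - x2)
    (hy3 : y3 = lam * (x1 - x3) - y1) :
    Z3 ≠ 0 ∧ L1 / Z3 = lam ∧ X3 / Z3 ^ 2 = x3 ∧ Y3 / Z3 ^ 3 = y3 :=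
  jacobian_mixed_addition_correct_general K hchar X1 Y1 Z1 hZ1 x1 y1 x2 y2 hx1 hy1 hxne T1 R2 B D H
    I E' J L1 V X3 Y3 Z3 hT1 hR2 hB hD hH hI hE hJ hL1 hV hX3 hY3 hZ3 lam x3 y3 hlam hx3 hy3
end

section
/- (Doubling step on Weierstrass curves with a4 = −3.) Let (X1, Y1, Z1) with Z1 ≠ 0 and Y1 ≠ 0 represent the affine point (x1, y1) = (X1/Z1², Y1/Z1³) on E: y² = x³ − 3·x + a6. Define T1 = Z1², A = Y1², B = X1·A, C = 3·(X1 − T1)·(X1 + T1), X3 = C² − 8·B, Z3 = (Y1 + Z1)² − A − T1, Y3 = C·(4·B − X3) − 8·A². Then Z3 = 2·Y1·Z1 ≠ 0, λ = C/Z3 where λ = (3·x1² − 3)/(2·y1), (X3/Z3², Y3/Z3³) = (λ² − 2·x1, λ·(x1 − X3/Z3²) − y1) is the double of (x1, y1), and for all x, y ∈ K the line value l = (Z3·T1)·y − 2·A − C·T1·x + X1·C satisfies l = 2·Y1·Z1³·(y − y1 − λ·(x − x1)); i.e. l is a nonzero K-multiple of the tangent line to E at (x1, y1) evaluated at (x,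 y). -/
/-!
Rescaling the Jacobian representative (X₁ : Y₁ : Z₁) by u = 2·Y₁ gives the equivalent triple
(4·B : 8·A² : Z₃), since Z₃ = 2·Y₁·Z₁. Over this common denominator Z₃ the slope is λ = C / Z₃, and
the affine doubling formulas x₃ = λ² − 2·x₁, y₃ = λ·(x₁ − x₃) − y₁ become, after clearing Z₃² and Z₃³,
exactly X₃ = C² − 2·(4·B) and Y₃ = C·(4·B − X₃) − 8·A². The line value is the tangent line multiplied
by 2·Y₁·Z₁³, which clears all of its denominators.
-/

section JacobianDoubling

variable {K : Type*} [Field K]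

theorem div_sq_eq_mul_div_mul_sq {u : K} (hu : u ≠ 0) (X Z : K) :
    X / Z ^ 2 = u ^ 2 * X / (u * Z) ^ 2 := by
  rw [mul_pow, mul_div_mul_left _ _ (pow_ne_zero 2 hu)]

theorem div_cube_eq_mul_div_mul_cube {u : K} (hu : u ≠ 0) (Y Z : K) :
    Y / Z ^ 3 = u ^ 3 * Y / (u * Z) ^ 3 := by
  rw [mul_pow, mul_div_mul_left _ _ (pow_ne_zero 3 hu)]

theorem sq_sub_two_mul_div_sq (C U Z : K) :
    (C ^ 2 - 2 * U) / Z ^ 2 = (C / Z) ^ 2 - 2 * (U / Z ^ 2) := by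
  rw [div_pow, sub_div, mul_div_assoc]

theorem mul_sub_sub_div_cube (C U V X Z : K) :
    (C * (U - X) - V) / Z ^ 3 = C / Z * (U / Z ^ 2 - X / Z ^ 2) - V / Z ^ 3 := by
  rw [← sub_div, div_mul_div_comm, ← pow_succ', sub_div]

theorem tangent_slope_jacobian (h2 : (2 : K) ≠ 0) {X Y Z : K} (hY : Y ≠ 0) (hZ : Z ≠ 0) :
    (3 * (X / Z ^ 2) ^ 2 - 3) / (2 * (Y / Z ^ 3)) = 3 * (X - Z ^ 2) * (X + Z ^ 2) / (2 * Y * Z) := by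
  field_simp
  ring

theorem tangent_line_jacobian (h2 : (2 : K) ≠ 0) {X Y Z : K} (hY : Y ≠ 0) (hZ : Z ≠ 0)
    (C x y : K) :
    2 * Y * Z ^ 3 * (y - Y / Z ^ 3 - C / (2 * Y * Z) * (x - X / Z ^ 2))
      = (2 * Y * Z * Z ^ 2) * y - 2 * Y ^ 2 - C * Z ^ 2 * x + X * C := by
  field_simp
  ring

end JacobianDoubling

theorem jacobian_doubling_a4_minus3_correct_general
    (K : Type*) [Field K] (hchar : (2 : K) ≠ 0)
    (X1 Y1 Z1 : K) (hZ1 : Z1 ≠ 0) (hY1 : Y1 ≠ 0)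
    (x1 y1 : K)
    (hx1 : x1 = X1 / Z1 ^ 2) (hy1 : y1 = Y1 / Z1 ^ 3)
    (T1 A B C X3 Z3 Y3 : K)
    (hT1 : T1 = Z1 ^ 2) (hA : A = Y1 ^ 2) (hB : B = X1 * A)
    (hC : C = 3 * (X1 - T1) * (X1 + T1))
    (hX3 : X3 = C ^ 2 - 8 * B)
    (hZ3 : Z3 = (Y1 + Z1) ^ 2 - A - T1)
    (hY3 : Y3 = C * (4 * B - X3) - 8 * A ^ 2)
    (lam : K) (hlam : lam = (3 * x1 ^ 2 - 3) / (2 * y1)) :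
    Z3 = 2 * Y1 * Z1 ∧ Z3 ≠ 0 ∧ C / Z3 = lam ∧
    X3 / Z3 ^ 2 = lam ^ 2 - 2 * x1 ∧
    Y3 / Z3 ^ 3 = lam * (x1 - X3 / Z3 ^ 2) - y1 ∧
    ∀ x y : K, (Z3 * T1) * y - 2 * A - C * T1 * x + X1 * C
      = 2 * Y1 * Z1 ^ 3 * (y - y1 - lam * (x - x1)) := by
  have hZ3_eq : Z3 = 2 * Y1 * Z1 := by rw [hZ3, hA, hT1]; ring
  have h2Y1 : 2 * Y1 ≠ 0 := mul_ne_zero hchar hY1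
  have hslope : C / Z3 = lam := by
    rw [hlam, hx1, hy1, tangent_slope_jacobian hchar hY1 hZ1, hZ3_eq, hC, hT1]
  have hx1_rescaled : x1 = 4 * B / Z3 ^ 2 := by
    rw [hx1, div_sq_eq_mul_div_mul_sq h2Y1, hZ3_eq, hB, hA]; ring
  have hy1_rescaled : y1 = 8 * A ^ 2 / Z3 ^ 3 := by
    rw [hy1, div_cube_eq_mul_div_mul_cube h2Y1, hZ3_eq, hA]; ring
  refine ⟨hZ3_eq, hZ3_eq ▸ mul_ne_zero h2Y1 hZ1, hslope, ?_, ?_, fun x y => ?_⟩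
  · rw [hX3, ← hslope, hx1_rescaled, ← sq_sub_two_mul_div_sq]; ring
  · rw [hY3, ← hslope, hx1_rescaled, hy1_rescaled, mul_sub_sub_div_cube]
  · rw [← hslope, hZ3_eq, hx1, hy1, tangent_line_jacobian hchar hY1 hZ1, hT1, hA]

/-- Doubling step in Jacobian coordinates on a Weierstrass curve with a₄ = −3:
the explicit formulas compute the tangent double and the line value l is the
evaluation of the tangent line scaled by 2·Y₁·Z₁³. -/
theorem jacobian_doubling_a4_minus3_correct
    (K : Type*) [Field K] (hchar : (2 : K) ≠ 0)
    (a6 : K)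
    (X1 Y1 Z1 : K) (hZ1 : Z1 ≠ 0) (hY1 : Y1 ≠ 0)
    (x1 y1 : K)
    (hx1 : x1 = X1 / Z1 ^ 2) (hy1 : y1 = Y1 / Z1 ^ 3)
    (h1 : y1 ^ 2 = x1 ^ 3 - 3 * x1 + a6)
    (T1 A B C X3 Z3 Y3 : K)
    (hT1 : T1 = Z1 ^ 2) (hA : A = Y1 ^ 2) (hB : B = X1 * A)
    (hC : C = 3 * (X1 - T1) * (X1 + T1))
    (hX3 : X3 = C ^ 2 - 8 * B)
    (hZ3 : Z3 = (Y1 + Z1) ^ 2 - A - T1)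
    (hY3 : Y3 = C * (4 * B - X3) - 8 * A ^ 2)
    (lam : K) (hlam : lam = (3 * x1 ^ 2 - 3) / (2 * y1)) :
    Z3 = 2 * Y1 * Z1 ∧ Z3 ≠ 0 ∧ C / Z3 = lam ∧
    X3 / Z3 ^ 2 = lam ^ 2 - 2 * x1 ∧
    Y3 / Z3 ^ 3 = lam * (x1 - X3 / Z3 ^ 2) - y1 ∧
    ∀ x y : K, (Z3 * T1) * y - 2 * A - C * T1 * x + X1 * C
      = 2 * Y1 * Z1 ^ 3 * (y - y1 - lam * (x - x1)) :=
  jacobian_doubling_a4_minus3_correct_general K hchar X1 Y1 Z1 hZ1 hY1 x1 y1 hx1 hy1 T1 A B C X3 Z3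
    Y3 hT1 hA hB hC hX3 hZ3 hY3 lam hlam
end

section
/- (Evaluation of the Miller function at a twisted point.) Let K ⊆ L be fields, δ ∈ K with δ ≠ 0, and α ∈ L with α² = δ. Let c_{Z²}, c_{XY}, c_{XZ}, Y3, Z3 ∈ K and X0, Y0, Z0 ∈ K with X0 ≠ 0, Z0 ≠ 0 and Z3·Y0 − Y3·Z0 ≠ 0. Set y0 = Y0/Z0 and η = (Z0 + Y0)/(X0·δ). Then in L: (c_{Z²}·(Z0² + Y0·Z0) + c_{XY}·X0·Y0·α + c_{XZ}·X0·Z0·α) / ((Z3·Y0 − Y3·Z0)·X0·α) = (c_{Z²}·η·α + c_{XY}·y0 + c_{XZ}) · (Z0/(Z3·Y0 − Y3·Z0)); in particular, the value φ(X0·α : Y0 : Z0)/(l1·l2)(X0·α : Y0 : Z0) equals c_{Z²}·η·α + c_{XY}·y0 + c_{XZ} up to a nonzero multiplicative factor from K. -/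
/-! Since `α² = δ`, the factor `1 / (X₀·α)` of the Miller function equals `α / (X₀·δ)`: dividing
by the twisted coordinate moves `α` from the `X`-terms of the conic onto its `Z²`-term, and the
result is a `K`-multiple of `c_{Z²}·η·α + c_{XY}·y₀ + c_{XZ}`. -/

theorem conic_div_twisted_coord {F : Type*} [Field F] {d α : F} (hα : α ^ 2 = d) (hd : d ≠ 0)
    {x y z : F} (hx : x ≠ 0) (hz : z ≠ 0) (c₁ c₂ c₃ : F) :
    (c₁ * (z ^ 2 + y * z) + c₂ * (x * α) * y + c₃ * (x * α) * z) / (x * α)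
      = (c₁ * ((z + y) / (x * d)) * α + c₂ * (y / z) + c₃) * z := by
  have hα0 : α ≠ 0 := by rintro rfl; exact hd (by simp [← hα])
  subst hα
  field_simp

theorem miller_function_evaluation_at_twisted_point_general
    (K L : Type*) [Field K] [Field L] [Algebra K L]
    (δ : K) (hδ : δ ≠ 0) (α : L) (hα : α ^ 2 = algebraMap K L δ)
    (cZ2 cXY cXZ Y3 Z3 X0 Y0 Z0 : K)
    (hX0 : X0 ≠ 0) (hZ0 : Z0 ≠ 0)
    (y0 η : K) (hy0 : y0 = Y0 / Z0) (hη : η = (Z0 + Y0) / (X0 * δ)) :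
    (algebraMap K L cZ2 * ((algebraMap K L Z0) ^ 2 + algebraMap K L Y0 * algebraMap K L Z0)
        + algebraMap K L cXY * (algebraMap K L X0 * α) * algebraMap K L Y0
        + algebraMap K L cXZ * (algebraMap K L X0 * α) * algebraMap K L Z0)
      / ((algebraMap K L Z3 * algebraMap K L Y0 - algebraMap K L Y3 * algebraMap K L Z0)
          * (algebraMap K L X0 * α))
    = (algebraMap K L cZ2 * algebraMap K L η * α
        + algebraMap K L cXY * algebraMap K L y0 + algebraMap K L cXZ)
      * (algebraMap K L Z0
          / (algebraMap K L Z3 * algebraMap K L Y0 - algebraMap K L Y3 * algebraMap K L Z0)) := by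
  subst hy0 hη
  rw [div_mul_eq_div_div_swap, ← mul_div_assoc, map_div₀, map_div₀, map_add, map_mul,
    conic_div_twisted_coord hα ((map_ne_zero _).mpr hδ) ((map_ne_zero _).mpr hX0)
      ((map_ne_zero _).mpr hZ0)]

/-- Evaluation of the Miller function φ/(l₁·l₂) at the twisted point
Q = (X₀·α : Y₀ : Z₀): it equals c_{Z²}·η·α + c_{XY}·y₀ + c_{XZ} up to the
nonzero factor Z₀/(Z₃·Y₀ − Y₃·Z₀) from the subfield K. -/
theorem miller_function_evaluation_at_twisted_point
    (K L : Type*) [Field K] [Field L] [Algebra K L]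
    (δ : K) (hδ : δ ≠ 0) (α : L) (hα : α ^ 2 = algebraMap K L δ)
    (cZ2 cXY cXZ Y3 Z3 X0 Y0 Z0 : K)
    (hX0 : X0 ≠ 0) (hZ0 : Z0 ≠ 0) (hl : Z3 * Y0 - Y3 * Z0 ≠ 0)
    (y0 η : K) (hy0 : y0 = Y0 / Z0) (hη : η = (Z0 + Y0) / (X0 * δ)) :
    (algebraMap K L cZ2 * ((algebraMap K L Z0) ^ 2 + algebraMap K L Y0 * algebraMap K L Z0)
        + algebraMap K L cXY * (algebraMap K L X0 * α) * algebraMap K L Y0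
        + algebraMap K L cXZ * (algebraMap K L X0 * α) * algebraMap K L Z0)
      / ((algebraMap K L Z3 * algebraMap K L Y0 - algebraMap K L Y3 * algebraMap K L Z0)
          * (algebraMap K L X0 * α))
    = (algebraMap K L cZ2 * algebraMap K L η * α
        + algebraMap K L cXY * algebraMap K L y0 + algebraMap K L cXZ)
      * (algebraMap K L Z0
          / (algebraMap K L Z3 * algebraMap K L Y0 - algebraMap K L Y3 * algebraMap K L Z0)) :=
  miller_function_evaluation_at_twisted_point_general K L δ hδ α hα cZ2 cXY cXZ Y3 Z3 X0 Y0 Z0 hX0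
    hZ0 y0 η hy0 hη
end
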